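/- arXiv:2102.07556 — 3 statements merged into one kernel-verified Lean document; each statement's English description precedes it below -/
import Mathlib

section
/- For every integer N ≥ 1 and every σ > 0, the Stieltjes–Wigert partition-function integral with β = 2 has the closed form ∫_{(0,∞)^N} ∏_{i=1}^N exp(−(log u_i)²/(2σ²)) · ∏_{1≤i<j≤N} (u_i − u_j)² du₁…du_N = N! · (2πσ²)^{N/2} · exp(σ²(4N³ − N)/6) · ∏_{k=1}^{N−1} (1 − e^{−kσ²})^{N−k}. -/
/-!
By Heine's formula (Andréief's identity for the two Vandermonde-type matrices `(w(uᵢ) uᵢʲ)` and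
`(uᵢᵏ)`), the integral is `N!` times the Hankel determinant of the moments of the weight. The
substitution `u = eˣ` turns the moments into Gaussian integrals, `mₙ = √(2πσ²) s^((n+1)²)` with
`s = e^(σ²/2)`. Since `(j+k+1)² = (j+1)² + (k²+2k) + 2jk`, the Hankel matrix is a diagonal
rescaling of the Vandermonde matrix in the nodes `qʲ`, `q = s² = e^(σ²)`, and its determinant
`∏_{i<j} (qʲ - qⁱ) = q^(∑ j²) ∏_{i<j} (1 - q^(-(j-i)))` is evaluated by grouping the pairs by
their difference `j - i`.
-/

open Real MeasureTheory Finset Matrix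

section Andreief

variable {ι : Type*} [Fintype ι] [DecidableEq ι]

theorem Matrix.det_eq_sum_sign_mul_prod_apply_perm {R : Type*} [CommRing R] (M : Matrix ι ι R) :
    M.det = ∑ σ : Equiv.Perm ι, (Equiv.Perm.sign σ : R) * ∏ i, M i (σ i) := by
  rw [← det_transpose, det_apply']
  rfl

theorem Matrix.sum_sign_mul_sign_mul_prod_apply_perm {R : Type*} [CommRing R]
    (M : Matrix ι ι R) :
    ∑ p : Equiv.Perm ι, ∑ q : Equiv.Perm ι,
        (Equiv.Perm.sign p : R) * Equiv.Perm.sign q * ∏ i, M (p i) (q i)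
      = (Fintype.card ι).factorial * M.det := by
  have row_perm (p : Equiv.Perm ι) :
      ∑ q : Equiv.Perm ι, (Equiv.Perm.sign q : R) * ∏ i, M (p i) (q i)
        = Equiv.Perm.sign p * M.det := by
    rw [← det_permute, det_eq_sum_sign_mul_prod_apply_perm]
    rfl
  have sign_mul_self (p : Equiv.Perm ι) : (Equiv.Perm.sign p : R) * Equiv.Perm.sign p = 1 := by
    rw [← Int.cast_mul, ← Units.val_mul, Int.units_mul_self, Units.val_one, Int.cast_one]
  simp_rw [mul_assoc, ← mul_sum, row_perm, ← mul_assoc, sign_mul_self, one_mul, sum_const,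
    card_univ, Fintype.card_perm, nsmul_eq_mul]

variable {α : Type*} [MeasurableSpace α] {μ : Measure α} [SigmaFinite μ]

/-- Andréief's identity. -/
theorem integral_det_mul_det (f g : ι → α → ℝ)
    (hfg : ∀ j k, Integrable (fun t => f j t * g k t) μ) :
    ∫ u, (of fun i j => f j (u i)).det * (of fun i k => g k (u i)).det ∂(Measure.pi fun _ => μ)
      = (Fintype.card ι).factorial * (of fun j k => ∫ t, f j t * g k t ∂μ).det := by
  have expand (u : ι → α) :
      (of fun i j => f j (u i)).det * (of fun i k => g k (u i)).det
        = ∑ p : Equiv.Perm ι, ∑ q : Equiv.Perm ι,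
            (Equiv.Perm.sign p : ℝ) * Equiv.Perm.sign q * ∏ i, f (p i) (u i) * g (q i) (u i) := by
    simp_rw [det_eq_sum_sign_mul_prod_apply_perm, sum_mul_sum, prod_mul_distrib, of_apply]
    exact sum_congr rfl fun p _ => sum_congr rfl fun q _ => by ring
  have integrable (p q : Equiv.Perm ι) : Integrable (fun u : ι → α =>
      ∏ i, f (p i) (u i) * g (q i) (u i)) (Measure.pi fun _ => μ) :=
    Integrable.fintype_prod (f := fun i t => f (p i) t * g (q i) t) fun i => hfg _ _
  have fubini (p q : Equiv.Perm ι) :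
      ∫ u, ∏ i, f (p i) (u i) * g (q i) (u i) ∂(Measure.pi fun _ => μ)
        = ∏ i, ∫ t, f (p i) t * g (q i) t ∂μ :=
    integral_fintype_prod_eq_prod fun i t => f (p i) t * g (q i) t
  simp_rw [expand]
  rw [integral_finsetSum _ fun p _ => integrable_finsetSum _ fun q _ =>
    (integrable p q).const_mul _]
  simp_rw [integral_finsetSum _ fun q _ => (integrable _ q).const_mul _, integral_const_mul,
    fubini]
  rw [← sum_sign_mul_sign_mul_prod_apply_perm]
  rfl

end Andreief

theorem integral_prod_mul_vandermonde_sq {n : ℕ} {μ : Measure ℝ} [SigmaFinite μ] (w : ℝ → ℝ)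
    (hw : ∀ m : ℕ, Integrable (fun t => w t * t ^ m) μ) :
    ∫ u, (∏ i, w (u i)) * ∏ i : Fin n, ∏ j ∈ Ioi i, (u i - u j) ^ 2
        ∂(Measure.pi fun _ => μ)
      = n.factorial * (of fun j k : Fin n => ∫ t, w t * t ^ ((j : ℕ) + k) ∂μ).det := by
  have integrand (u : Fin n → ℝ) : (∏ i, w (u i)) * ∏ i : Fin n, ∏ j ∈ Ioi i, (u i - u j) ^ 2
      = (of fun i j : Fin n => w (u i) * vandermonde u i j).det * (vandermonde u).det := by
    rw [det_mul_column, mul_assoc, ← sq, det_vandermonde]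
    simp_rw [← prod_pow]
    exact congrArg _ <| prod_congr rfl fun i _ => prod_congr rfl fun j _ => sub_sq_comm (u i) (u j)
  calc _ = ∫ u, (of fun i j : Fin n => w (u i) * u i ^ (j : ℕ)).det *
          (of fun i k : Fin n => u i ^ (k : ℕ)).det ∂(Measure.pi fun _ => μ) := by
        simp_rw [integrand]; rfl
    _ = (Fintype.card (Fin n)).factorial *
          (of fun j k : Fin n => ∫ t, w t * t ^ (j : ℕ) * t ^ (k : ℕ) ∂μ).det :=
        integral_det_mul_det (fun (j : Fin n) t => w t * t ^ (j : ℕ))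
          (fun (k : Fin n) t => t ^ (k : ℕ)) fun j k => by
            simpa only [mul_assoc, ← pow_add] using hw ((j : ℕ) + k)
    _ = _ := by simp_rw [Fintype.card_fin, mul_assoc, ← pow_add]

theorem neg_mul_sq_add_mul_eq {a : ℝ} (ha : a ≠ 0) (c x : ℝ) :
    -a * x ^ 2 + c * x = -a * (x - c / (2 * a)) ^ 2 + c ^ 2 / (4 * a) := by
  field_simp
  ring

theorem integrable_exp_neg_mul_sq_add_mul {a : ℝ} (ha : 0 < a) (c : ℝ) :
    Integrable (fun x : ℝ => exp (-a * x ^ 2 + c * x)) := by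
  simp_rw [neg_mul_sq_add_mul_eq ha.ne', exp_add]
  exact ((integrable_exp_neg_mul_sq ha).comp_sub_right (c / (2 * a))).mul_const _

theorem integral_exp_neg_mul_sq_add_mul {a : ℝ} (ha : 0 < a) (c : ℝ) :
    ∫ x : ℝ, exp (-a * x ^ 2 + c * x) = √(π / a) * exp (c ^ 2 / (4 * a)) := by
  simp_rw [neg_mul_sq_add_mul_eq ha.ne', exp_add]
  rw [integral_mul_const, integral_sub_right_eq_self (fun x => exp (-a * x ^ 2)),
    integral_gaussian]

section ExpSubstitution

variable {E : Type*} [NormedAddCommGroup E] [NormedSpace ℝ E]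

theorem integral_comp_exp (g : ℝ → E) : ∫ x, exp x • g (exp x) = ∫ y in Set.Ioi 0, g y := by
  simpa [abs_of_pos (exp_pos _)] using (integral_image_eq_integral_abs_deriv_smul
    MeasurableSet.univ (fun x _ => (hasDerivAt_exp x).hasDerivWithinAt)
    exp_injective.injOn g).symm

theorem integrable_comp_exp_iff (g : ℝ → E) :
    Integrable (fun x => exp x • g (exp x)) ↔ IntegrableOn g (Set.Ioi 0) := by
  simpa [abs_of_pos (exp_pos _)] using (integrableOn_image_iff_integrableOn_abs_deriv_smul
    MeasurableSet.univ (fun x _ => (hasDerivAt_exp x).hasDerivWithinAt)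
    exp_injective.injOn g).symm

end ExpSubstitution

theorem exp_smul_exp_neg_log_sq_mul_pow (σ x : ℝ) (n : ℕ) :
    exp x • (exp (-log (exp x) ^ 2 / (2 * σ ^ 2)) * exp x ^ n)
      = exp (-(2 * σ ^ 2)⁻¹ * x ^ 2 + (n + 1) * x) := by
  rw [smul_eq_mul, log_exp, ← exp_nat_mul, ← exp_add, ← exp_add]
  ring_nf

theorem integrableOn_exp_neg_log_sq_mul_pow {σ : ℝ} (hσ : σ ≠ 0) (n : ℕ) :
    IntegrableOn (fun t => exp (-log t ^ 2 / (2 * σ ^ 2)) * t ^ n) (Set.Ioi 0) := by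
  rw [← integrable_comp_exp_iff]
  simp_rw [exp_smul_exp_neg_log_sq_mul_pow]
  exact integrable_exp_neg_mul_sq_add_mul (by positivity) _

theorem integral_exp_neg_log_sq_mul_pow {σ : ℝ} (hσ : σ ≠ 0) (n : ℕ) :
    ∫ t in Set.Ioi 0, exp (-log t ^ 2 / (2 * σ ^ 2)) * t ^ n
      = √(2 * π * σ ^ 2) * exp (σ ^ 2 * (n + 1) ^ 2 / 2) := by
  rw [← integral_comp_exp]
  simp_rw [exp_smul_exp_neg_log_sq_mul_pow]
  rw [integral_exp_neg_mul_sq_add_mul (by positivity)]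
  congr 2
  · field_simp
  · field_simp
    norm_num

theorem prod_range_prod_range_sub {M : Type*} [CommMonoid M] (g : ℕ → M) (n : ℕ) :
    ∏ j ∈ range n, ∏ i ∈ range j, g (j - i) = ∏ k ∈ Ico 1 n, g k ^ (n - k) := by
  induction n with
  | zero => simp
  | succ n ih =>
    have reflect : ∏ i ∈ range n, g (n - i) = ∏ k ∈ Ico 1 (n + 1), g k := by
      rw [prod_Ico_eq_prod_range, Nat.add_sub_cancel, ← prod_range_reflect]
      exact prod_congr rfl fun i hi => by rw [mem_range] at hi; congr 1; omega
    have drop_top : ∏ k ∈ Ico 1 (n + 1), g k ^ (n - k) = ∏ k ∈ Ico 1 n, g k ^ (n - k) := by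
      refine (prod_subset (Ico_subset_Ico_right n.le_succ) fun k hk hk' => ?_).symm
      obtain rfl : k = n := by simp only [mem_Ico] at hk hk'; omega
      rw [Nat.sub_self, pow_zero]
    rw [prod_range_succ, ih, reflect, ← drop_top, ← prod_mul_distrib]
    refine prod_congr rfl fun k hk => ?_
    rw [mem_Ico] at hk
    rw [← pow_succ, Nat.sub_add_comm (by omega)]

theorem prod_range_prod_range_pow_sub_pow {K : Type*} [Field K] {q : K} (hq : q ≠ 0) (n : ℕ) :
    ∏ j ∈ range n, ∏ i ∈ range j, (q ^ j - q ^ i)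
      = q ^ (∑ j ∈ range n, j ^ 2) * ∏ k ∈ Ico 1 n, (1 - q⁻¹ ^ k) ^ (n - k) := by
  have factor (j i : ℕ) (hij : i ≤ j) : q ^ j - q ^ i = q ^ j * (1 - q⁻¹ ^ (j - i)) := by
    rw [inv_pow, pow_sub₀ q hq hij]
    field_simp
  rw [← prod_range_prod_range_sub, ← prod_pow_eq_pow_sum, ← prod_mul_distrib]
  refine prod_congr rfl fun j _ => ?_
  rw [prod_congr rfl fun i hi => factor j i (mem_range.1 hi).le, prod_mul_distrib, prod_const,
    card_range, ← pow_mul, sq]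

theorem Fin.prod_prod_Ioi_eq_prod_range_prod_range {M : Type*} [CommMonoid M] {n : ℕ}
    (f : ℕ → ℕ → M) :
    ∏ i : Fin n, ∏ j ∈ Ioi i, f i j = ∏ j ∈ range n, ∏ i ∈ range j, f i j := by
  have inner (i : Fin n) : ∏ j ∈ Ioi i, f i j = ∏ j ∈ Ioo (i : ℕ) n, f i j := by
    rw [← Fin.map_valEmbedding_Ioi, prod_map]
    rfl
  simp_rw [inner]
  rw [Fin.prod_univ_eq_prod_range (fun i => ∏ j ∈ Ioo i n, f i j)]
  refine prod_comm' fun i j => ?_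
  simp only [mem_range, mem_Ioo]
  omega

theorem Matrix.det_vandermonde_pow {K : Type*} [Field K] {q : K} (hq : q ≠ 0) (n : ℕ) :
    (vandermonde fun i : Fin n => q ^ (i : ℕ)).det
      = q ^ (∑ j ∈ range n, j ^ 2) * ∏ k ∈ Ico 1 n, (1 - q⁻¹ ^ k) ^ (n - k) := by
  rw [det_vandermonde, Fin.prod_prod_Ioi_eq_prod_range_prod_range (fun i j => q ^ j - q ^ i),
    prod_range_prod_range_pow_sub_pow hq]

theorem Matrix.det_pow_add_add_one_sq {K : Type*} [Field K] {s : K} (hs : s ≠ 0) (n : ℕ) :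
    (of fun j k : Fin n => s ^ (((j : ℕ) + k + 1) ^ 2)).det
      = s ^ (∑ j ∈ range n, (2 * j + 1) ^ 2) * ∏ k ∈ Ico 1 n, (1 - (s ^ 2)⁻¹ ^ k) ^ (n - k) := by
  have entry (j k : ℕ) :
      s ^ ((j + k + 1) ^ 2) = s ^ ((j + 1) ^ 2) * (s ^ (k ^ 2 + 2 * k) * ((s ^ 2) ^ j) ^ k) := by
    rw [← pow_mul, ← pow_mul, ← pow_add, ← pow_add]
    ring_nf
  have exponent : ∑ j ∈ range n, (j + 1) ^ 2 + ∑ k ∈ range n, (k ^ 2 + 2 * k)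
      + 2 * ∑ j ∈ range n, j ^ 2 = ∑ j ∈ range n, (2 * j + 1) ^ 2 := by
    rw [mul_sum, ← sum_add_distrib, ← sum_add_distrib]
    exact sum_congr rfl fun j _ => by ring
  calc _ = (of fun j k : Fin n => s ^ (((j : ℕ) + 1) ^ 2) * (s ^ ((k : ℕ) ^ 2 + 2 * k) *
          ((s ^ 2) ^ (j : ℕ)) ^ (k : ℕ))).det := by
        simp_rw [entry]
    _ = (∏ j : Fin n, s ^ (((j : ℕ) + 1) ^ 2)) *
          ((∏ k : Fin n, s ^ ((k : ℕ) ^ 2 + 2 * k)) *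
            (vandermonde (fun i : Fin n => (s ^ 2) ^ (i : ℕ))).det) := by
        rw [← det_mul_row (fun k : Fin n => s ^ ((k : ℕ) ^ 2 + 2 * k)), ← det_mul_column]
        rfl
    _ = _ := by
        rw [det_vandermonde_pow (pow_ne_zero 2 hs), prod_pow_eq_pow_sum, prod_pow_eq_pow_sum,
          Fin.sum_univ_eq_sum_range (fun j => (j + 1) ^ 2),
          Fin.sum_univ_eq_sum_range (fun k => k ^ 2 + 2 * k), ← pow_mul, ← mul_assoc, ← mul_assoc,
          ← pow_add, ← pow_add, exponent]

theorem sum_range_two_mul_add_one_sq (n : ℕ) :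
    ((∑ j ∈ range n, (2 * j + 1) ^ 2 : ℕ) : ℝ) = (4 * n ^ 3 - n) / 3 := by
  push_cast
  induction n with
  | zero => simp
  | succ n ih => rw [sum_range_succ, ih]; push_cast; ring

theorem det_moments_exp_neg_log_sq {σ : ℝ} (hσ : σ ≠ 0) (n : ℕ) :
    (of fun j k : Fin n =>
        ∫ t in Set.Ioi 0, exp (-log t ^ 2 / (2 * σ ^ 2)) * t ^ ((j : ℕ) + k)).det
      = √(2 * π * σ ^ 2) ^ n * exp (σ ^ 2 * (4 * n ^ 3 - n) / 6) *
          ∏ k ∈ Ico 1 n, (1 - exp (-k * σ ^ 2)) ^ (n - k) := by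
  have moments : (of fun j k : Fin n =>
      ∫ t in Set.Ioi 0, exp (-log t ^ 2 / (2 * σ ^ 2)) * t ^ ((j : ℕ) + k))
        = √(2 * π * σ ^ 2) • of fun j k : Fin n => exp (σ ^ 2 / 2) ^ (((j : ℕ) + k + 1) ^ 2) := by
    ext j k
    rw [Matrix.smul_apply, of_apply, of_apply, smul_eq_mul, integral_exp_neg_log_sq_mul_pow hσ,
      ← exp_nat_mul]
    push_cast
    ring_nf
  have gaussian_part : exp (σ ^ 2 / 2) ^ (∑ j ∈ range n, (2 * j + 1) ^ 2)
      = exp (σ ^ 2 * (4 * n ^ 3 - n) / 6) := by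
    rw [← exp_nat_mul, sum_range_two_mul_add_one_sq]
    ring_nf
  have q_power (k : ℕ) : (exp (σ ^ 2 / 2) ^ 2)⁻¹ ^ k = exp (-k * σ ^ 2) := by
    rw [← exp_nat_mul, ← Real.exp_neg, ← exp_nat_mul]
    ring_nf
  rw [moments, det_smul, Fintype.card_fin, det_pow_add_add_one_sq (exp_ne_zero _), gaussian_part]
  simp_rw [q_power]
  ring

theorem stieltjes_wigert_beta_two_closed_form_general (N : ℕ) (σ : ℝ) (hσ : 0 < σ) :
    (∫ u : Fin N → ℝ in Set.univ.pi (fun _ => Set.Ioi (0 : ℝ)),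
        (∏ i, Real.exp (-(Real.log (u i)) ^ 2 / (2 * σ ^ 2))) *
          ∏ i, ∏ j ∈ Finset.Ioi i, (u i - u j) ^ 2)
      = (N.factorial : ℝ) * (2 * Real.pi * σ ^ 2) ^ ((N : ℝ) / 2) *
          Real.exp (σ ^ 2 * (4 * (N : ℝ) ^ 3 - (N : ℝ)) / 6) *
          ∏ k ∈ Finset.Icc 1 (N - 1), (1 - Real.exp (-(k : ℝ) * σ ^ 2)) ^ (N - k) := by
  have index_range : Icc 1 (N - 1) = Ico 1 N := by
    ext k
    simp only [mem_Icc, mem_Ico]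
    omega
  rw [volume_pi, Measure.restrict_pi_pi, integral_prod_mul_vandermonde_sq _
      fun m => integrableOn_exp_neg_log_sq_mul_pow hσ.ne' m,
    det_moments_exp_neg_log_sq hσ.ne', rpow_div_two_eq_sqrt _ (by positivity), rpow_natCast,
    index_range]
  ring

/-- Exact closed form of the β = 2 Stieltjes–Wigert partition-function integral:
for every `N ≥ 1` and `σ > 0`,
`∫_{(0,∞)^N} ∏ᵢ exp(−(log uᵢ)²/(2σ²)) · ∏_{i<j} (uᵢ − uⱼ)² du =
  N! · (2πσ²)^{N/2} · exp(σ²(4N³ − N)/6) · ∏_{k=1}^{N−1} (1 − e^{−kσ²})^{N−k}`. -/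
theorem stieltjes_wigert_beta_two_closed_form (N : ℕ) (hN : 1 ≤ N) (σ : ℝ) (hσ : 0 < σ) :
    (∫ u : Fin N → ℝ in Set.univ.pi (fun _ => Set.Ioi (0 : ℝ)),
        (∏ i, Real.exp (-(Real.log (u i)) ^ 2 / (2 * σ ^ 2))) *
          ∏ i, ∏ j ∈ Finset.Ioi i, (u i - u j) ^ 2)
      = (N.factorial : ℝ) * (2 * Real.pi * σ ^ 2) ^ ((N : ℝ) / 2) *
          Real.exp (σ ^ 2 * (4 * (N : ℝ) ^ 3 - (N : ℝ)) / 6) *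
          ∏ k ∈ Finset.Icc 1 (N - 1), (1 - Real.exp (-(k : ℝ) * σ ^ 2)) ^ (N - k) :=
  stieltjes_wigert_beta_two_closed_form_general N σ hσ
end

section
/- For every t > 0, ∫_0^1 (1 − x) · log(1 − e^{−tx}) dx = −π²/(6t) + (ζ(3) − Li₃(e^{−t}))/t², where Li₃(x) = Σ_{k=1}^∞ x^k/k³ and ζ(3) = Σ_{k=1}^∞ 1/k³. -/
/-!
Expand `log (1 - e^{-tx}) = -∑ₙ e^{-(n+1)tx} / (n+1)` and integrate term by term, which is
legitimate because all terms are nonnegative on `[0, 1]`. With `a = (n+1)t`, the `n`-th term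
contributes `(a - 1 + e^{-a}) / (a² (n+1)) = 1/(t (n+1)²) - (1 - e^{-(n+1)t}) / (t² (n+1)³)`,
and summing over `n` gives `π²/(6t) - (ζ(3) - Li₃(e^{-t}))/t²`.
-/

open Real MeasureTheory Set

lemma integral_one_sub_mul_exp_neg_mul {a : ℝ} (ha : a ≠ 0) :
    ∫ x in (0 : ℝ)..1, (1 - x) * exp (-a * x) = (a - 1 + exp (-a)) / a ^ 2 := by
  have hderiv (x : ℝ) : HasDerivAt (fun x => (a * x + 1 - a) * exp (-a * x) / a ^ 2)
      ((1 - x) * exp (-a * x)) x := by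
    have h := (((((hasDerivAt_id x).const_mul a).add_const 1).sub_const a).mul
      ((hasDerivAt_id x).const_mul (-a)).exp).div_const (a ^ 2)
    refine h.congr_deriv ?_
    simp only [id]
    field_simp
    ring
  rw [intervalIntegral.integral_eq_sub_of_hasDerivAt (fun x _ => hderiv x)
    ((by fun_prop : Continuous fun x : ℝ => (1 - x) * exp (-a * x)).intervalIntegrable 0 1)]
  simp only [mul_zero, mul_one, exp_zero]
  field_simp
  ring

lemma integral_eq_of_hasSum_of_nonneg {α : Type*} [MeasurableSpace α] {μ : Measure α}
    {F : ℕ → α → ℝ} {f : α → ℝ} {I : ℝ} (hF_int : ∀ n, Integrable (F n) μ)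
    (hF_nonneg : ∀ n, 0 ≤ᵐ[μ] F n) (hf : ∀ᵐ x ∂μ, HasSum (fun n => F n x) (f x))
    (hI : HasSum (fun n => ∫ x, F n x ∂μ) I) : ∫ x, f x ∂μ = I := by
  have hnorm (n : ℕ) : ∫ x, ‖F n x‖ ∂μ = ∫ x, F n x ∂μ :=
    integral_congr_ae <| (hF_nonneg n).mono fun x hx => Real.norm_of_nonneg hx
  have hsum := hasSum_integral_of_summable_integral_norm hF_int
    (by simpa only [hnorm] using hI.summable)
  rw [integral_congr_ae (hf.mono fun x hx => hx.tsum_eq.symm)]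
  exact hsum.unique hI

lemma summable_one_div_succ_pow {p : ℕ} (hp : 1 < p) :
    Summable fun n : ℕ => 1 / ((n : ℝ) + 1) ^ p := by
  simpa using (summable_nat_add_iff 1).mpr (Real.summable_one_div_nat_pow.mpr hp)

lemma summable_pow_succ_div_succ_pow {r : ℝ} (hr₀ : 0 ≤ r) (hr₁ : r ≤ 1) {p : ℕ} (hp : 1 < p) :
    Summable fun n : ℕ => r ^ (n + 1) / ((n : ℝ) + 1) ^ p :=
  (summable_one_div_succ_pow hp).of_nonneg_of_le (fun n => by positivity) fun n =>
    div_le_div_of_nonneg_right (pow_le_one₀ hr₀ hr₁) (by positivity)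

lemma hasSum_one_div_succ_sq : HasSum (fun n : ℕ => 1 / ((n : ℝ) + 1) ^ 2) (π ^ 2 / 6) := by
  simpa using (hasSum_nat_add_iff' 1).mpr hasSum_zeta_two

lemma integral_one_sub_mul_exp_pow_succ_div {t : ℝ} (ht : t ≠ 0) (n : ℕ) :
    ∫ x in (0 : ℝ)..1, (1 - x) * (exp (-t * x) ^ (n + 1) / (n + 1))
      = 1 / t * (1 / ((n : ℝ) + 1) ^ 2)
        - 1 / t ^ 2 * (1 / ((n : ℝ) + 1) ^ 3 - exp (-t) ^ (n + 1) / ((n : ℝ) + 1) ^ 3) := by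
  have hexp (y : ℝ) : exp (-t * y) ^ (n + 1) = exp (-(((n : ℝ) + 1) * t) * y) := by
    rw [← exp_nat_mul]; push_cast; ring_nf
  have hn : (n : ℝ) + 1 ≠ 0 := by positivity
  simp_rw [hexp, mul_div_assoc', intervalIntegral.integral_div]
  rw [integral_one_sub_mul_exp_neg_mul (mul_ne_zero hn ht), ← mul_one (-t), hexp, mul_one]
  field_simp
  ring

lemma hasSum_integral_one_sub_mul_exp_pow_succ_div {t : ℝ} (ht : 0 < t) :
    HasSum (fun n : ℕ => ∫ x in (0 : ℝ)..1, (1 - x) * (exp (-t * x) ^ (n + 1) / (n + 1)))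
      (1 / t * (π ^ 2 / 6) - 1 / t ^ 2 * ((∑' k : ℕ, 1 / ((k : ℝ) + 1) ^ 3)
        - ∑' k : ℕ, exp (-t) ^ (k + 1) / ((k : ℝ) + 1) ^ 3)) := by
  have hζ₃ := (summable_one_div_succ_pow (p := 3) (by norm_num)).hasSum
  have hLi₃ := (summable_pow_succ_div_succ_pow (exp_pos (-t)).le
    (exp_le_one_iff.mpr (neg_nonpos.mpr ht.le)) (p := 3) (by norm_num)).hasSum
  simp_rw [integral_one_sub_mul_exp_pow_succ_div ht.ne']
  exact (hasSum_one_div_succ_sq.mul_left (1 / t)).sub ((hζ₃.sub hLi₃).mul_left (1 / t ^ 2))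

/-- Integral evaluation producing the trilogarithm term: for every `t > 0`,
`∫_0^1 (1 − x) log(1 − e^{−tx}) dx = −π²/(6t) + (ζ(3) − Li₃(e^{−t}))/t²`. -/
theorem integral_log_one_sub_exp (t : ℝ) (ht : 0 < t) :
    ∫ x in (0 : ℝ)..1, (1 - x) * Real.log (1 - Real.exp (-t * x))
      = -Real.pi ^ 2 / (6 * t) +
        ((∑' k : ℕ, 1 / ((k : ℝ) + 1) ^ 3) -
            ∑' k : ℕ, (Real.exp (-t)) ^ (k + 1) / ((k : ℝ) + 1) ^ 3) / t ^ 2 := by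
  have hseries : ∀ x ∈ Ioc (0 : ℝ) 1,
      HasSum (fun n : ℕ => (1 - x) * (exp (-t * x) ^ (n + 1) / (n + 1)))
        ((1 - x) * -log (1 - exp (-t * x))) := fun x hx =>
    (hasSum_pow_div_log_of_abs_lt_one <| by
      rw [abs_of_pos (exp_pos _), exp_lt_one_iff, neg_mul, neg_lt_zero]
      exact mul_pos ht hx.1).mul_left (1 - x)
  have hintegral := integral_eq_of_hasSum_of_nonneg (μ := volume.restrict (Ioc 0 1))
    (fun _ => (by fun_prop : Continuous _).integrableOn_Ioc)
    (fun _ => (ae_restrict_iff' measurableSet_Ioc).mpr (.of_forall fun x hx =>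
      mul_nonneg (sub_nonneg.mpr hx.2) (by positivity)))
    ((ae_restrict_iff' measurableSet_Ioc).mpr (.of_forall hseries))
    (by simpa only [intervalIntegral.integral_of_le zero_le_one]
      using hasSum_integral_one_sub_mul_exp_pow_succ_div ht)
  simp_rw [mul_neg, integral_neg] at hintegral
  rw [intervalIntegral.integral_of_le zero_le_one, neg_eq_iff_eq_neg.mp hintegral]
  ring
end

section
/- For every t > 0 and every λ with |λ| < 2√t, the Wigner semicircle density solves the saddle-point equation in the principal value sense: lim_{ε→0⁺} ∫_{{λ' : |λ'| ≤ 2√t, |λ' − λ| ≥ ε}} (1/(2πt))·√(4t − λ'²)/(λ − λ') dλ' = λ/(2t). -/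
/-!
On each side of `l` the integrand `√(R² - x²) / (l - x)` has the elementary antiderivative
`l arcsin (x / R) - √(R² - x²) + √(R² - l²) log ((R² - l x + √(R² - l²) √(R² - x²)) / |x - l|)`.
Its values at `±R` differ by `π l`, and the singular terms `log |x - l|` take the same value at
`l ± ε`, so the cut-off integral is `π l` plus the increment of a function continuous at `l`.
Scaling by `1 / (2πt)` with `R = 2√t` gives `l / (2t)`.
-/

open Real Set Filter Topology MeasureTheory

lemma hasDerivAt_arcsin_div {R x : ℝ} (hx : |x| < R) :
    HasDerivAt (fun y => arcsin (y / R)) (1 / √(R ^ 2 - x ^ 2)) x := by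
  have hR : 0 < R := (abs_nonneg x).trans_lt hx
  obtain ⟨hxl, hxr⟩ := abs_lt.1 hx
  have h := (hasDerivAt_arcsin (x := x / R) (by rw [ne_eq, div_eq_iff hR.ne']; linarith)
    (by rw [ne_eq, div_eq_iff hR.ne']; linarith)).comp x ((hasDerivAt_id x).div_const R)
  refine h.congr_deriv ?_
  have : 1 - (x / R) ^ 2 = (R ^ 2 - x ^ 2) / R ^ 2 := by field_simp
  rw [this, sqrt_div' _ (by positivity), sqrt_sq hR.le]
  field_simp

namespace Semicircle

variable {R l x a b ε : ℝ}

noncomputable def logArg (R l x : ℝ) : ℝ :=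
  R ^ 2 - l * x + √(R ^ 2 - l ^ 2) * √(R ^ 2 - x ^ 2)

lemma logArg_pos (hl : |l| < R) (hx : |x| ≤ R) : 0 < logArg R l x := by
  have hlx : l * x < R ^ 2 := calc
    l * x ≤ |l| * |x| := (le_abs_self _).trans (abs_mul l x).le
    _ < R ^ 2 := by nlinarith [abs_nonneg l, abs_nonneg x]
  unfold logArg
  nlinarith [mul_nonneg (sqrt_nonneg (R ^ 2 - l ^ 2)) (sqrt_nonneg (R ^ 2 - x ^ 2))]

lemma hasDerivAt_logArg (hx : |x| < R) :
    HasDerivAt (logArg R l) (-l - √(R ^ 2 - l ^ 2) * x / √(R ^ 2 - x ^ 2)) x := by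
  have hw : R ^ 2 - x ^ 2 ≠ 0 := by nlinarith [abs_nonneg x, sq_abs x]
  have h := (((hasDerivAt_id x).const_mul l).const_sub (R ^ 2)).add
    ((((hasDerivAt_pow 2 x).const_sub (R ^ 2)).sqrt hw).const_mul √(R ^ 2 - l ^ 2))
  refine h.congr_deriv ?_
  field_simp
  ring

noncomputable def regularPart (R l x : ℝ) : ℝ :=
  l * arcsin (x / R) - √(R ^ 2 - x ^ 2) + √(R ^ 2 - l ^ 2) * log (logArg R l x)

lemma continuousAt_regularPart (hl : |l| < R) (hx : |x| ≤ R) :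
    ContinuousAt (regularPart R l) x := by
  have : Continuous (logArg R l) := by unfold logArg; fun_prop
  unfold regularPart
  have := this.continuousAt.log (logArg_pos hl hx).ne'
  fun_prop

/-- Since `Real.log` is `log |·|`, this is an antiderivative on both sides of `l`. -/
noncomputable def antideriv (R l x : ℝ) : ℝ :=
  regularPart R l x - √(R ^ 2 - l ^ 2) * log (x - l)

lemma hasDerivAt_antideriv (hl : |l| < R) (hx : |x| < R) (hxl : x ≠ l) :
    HasDerivAt (antideriv R l) (√(R ^ 2 - x ^ 2) / (l - x)) x := by
  have hA := logArg_pos hl hx.le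
  have hw : 0 < R ^ 2 - x ^ 2 := by nlinarith [abs_nonneg x, sq_abs x]
  have hs : 0 ≤ R ^ 2 - l ^ 2 := by nlinarith [abs_nonneg l, sq_abs l]
  have h := ((((hasDerivAt_arcsin_div hx).const_mul l).sub
    (((hasDerivAt_pow 2 x).const_sub (R ^ 2)).sqrt hw.ne')).add
    (((hasDerivAt_logArg (l := l) hx).log hA.ne').const_mul √(R ^ 2 - l ^ 2))).sub
    ((((hasDerivAt_id x).sub_const l).log (sub_ne_zero.2 hxl)).const_mul √(R ^ 2 - l ^ 2))
  refine h.congr_deriv ?_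
  unfold logArg at hA ⊢
  set w := √(R ^ 2 - x ^ 2)
  set s := √(R ^ 2 - l ^ 2)
  have hw2 : w ^ 2 = R ^ 2 - x ^ 2 := sq_sqrt hw.le
  have hs2 : s ^ 2 = R ^ 2 - l ^ 2 := sq_sqrt hs
  have hw0 : w ≠ 0 := (sqrt_pos.2 hw).ne'
  have hA' : R ^ 2 - l * x + w * s ≠ 0 := by rw [mul_comm w s]; exact hA.ne'
  simp only [id, Nat.cast_ofNat, pow_one, Nat.add_one_sub_one]
  field_simp
  linear_combination (-(x - l)) * ((-(x - l) * x - w ^ 2) * hs2 + (l ^ 2 - l * x + w * s) * hw2)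

lemma continuousOn_sqrt_div (hl : l ∉ Icc a b) :
    ContinuousOn (fun x => √(R ^ 2 - x ^ 2) / (l - x)) (Icc a b) :=
  ContinuousOn.div (by fun_prop) (by fun_prop) fun x hx h => hl (sub_eq_zero.1 h ▸ hx)

lemma setIntegral_Icc_sqrt_div (hl : |l| < R) (ha : -R ≤ a) (hab : a ≤ b) (hb : b ≤ R)
    (hlab : l ∉ Icc a b) :
    ∫ x in Icc a b, √(R ^ 2 - x ^ 2) / (l - x) = antideriv R l b - antideriv R l a := by
  rw [integral_Icc_eq_integral_Ioc, ← intervalIntegral.integral_of_le hab]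
  refine intervalIntegral.integral_eq_sub_of_hasDeriv_right_of_le hab (fun x hx => ?_)
    (fun x hx => ?_) ((continuousOn_sqrt_div hlab).intervalIntegrable_of_Icc hab)
  · have hxl : x ≠ l := fun h => hlab (h ▸ hx)
    exact ((continuousAt_regularPart hl (abs_le.2 ⟨ha.trans hx.1, hx.2.trans hb⟩)).sub
      (continuousAt_const.mul ((continuousAt_id.sub_const l).log (sub_ne_zero.2 hxl))))
      |>.continuousWithinAt
  · have hxl : x ≠ l := fun h => hlab (h ▸ Ioo_subset_Icc_self hx)
    exact (hasDerivAt_antideriv hl (abs_lt.2 ⟨ha.trans_lt hx.1, hx.2.trans_le hb⟩) hxl)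
      |>.hasDerivWithinAt

lemma antideriv_sub_antideriv_neg (hl : |l| < R) :
    antideriv R l R - antideriv R l (-R) = π * l := by
  obtain ⟨hl₁, hl₂⟩ := abs_lt.1 hl
  have hR : R ≠ 0 := by linarith
  have hRl : R - l ≠ 0 := by linarith
  have hlogR : log (logArg R l R) = log R + log (R - l) := by
    rw [← log_mul hR hRl, logArg, sub_self, sqrt_zero, mul_zero]; ring_nf
  have hlogR' : log (logArg R l (-R)) = log R + log (-R - l) := by
    rw [← log_neg_eq_log (-R - l), ← log_mul hR (by linarith), logArg, neg_sq, sub_self,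
      sqrt_zero, mul_zero]
    ring_nf
  simp only [antideriv, regularPart, hlogR, hlogR', div_self hR, neg_div_self hR, arcsin_one,
    arcsin_neg_one, neg_sq, sub_self, sqrt_zero]
  ring

lemma antideriv_sub_sub_antideriv_add :
    antideriv R l (l - ε) - antideriv R l (l + ε) =
      regularPart R l (l - ε) - regularPart R l (l + ε) := by
  simp only [antideriv, sub_sub_cancel_left, add_sub_cancel_left, log_neg_eq_log]
  ring

lemma setOf_abs_le_and_le_abs_sub (hε : 0 ≤ ε) (hl : |l| ≤ R) :
    {x : ℝ | |x| ≤ R ∧ ε ≤ |x - l|} = Icc (-R) (l - ε) ∪ Icc (l + ε) R := by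
  obtain ⟨hl₁, hl₂⟩ := abs_le.1 hl
  ext x
  simp only [mem_ofPred_eq, mem_union, mem_Icc, abs_le, le_abs]
  constructor
  · rintro ⟨⟨hxl, hxr⟩, h | h⟩
    · exact .inr ⟨by linarith, hxr⟩
    · exact .inl ⟨hxl, by linarith⟩
  · rintro (⟨hxl, hxr⟩ | ⟨hxl, hxr⟩)
    · exact ⟨⟨hxl, by linarith⟩, .inr (by linarith)⟩
    · exact ⟨⟨by linarith, hxr⟩, .inl (by linarith)⟩

lemma setIntegral_cutoff_sqrt_div (hl : |l| < R) (hε : 0 < ε) (hεR : ε ≤ R - |l|) :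
    ∫ x in {x : ℝ | |x| ≤ R ∧ ε ≤ |x - l|}, √(R ^ 2 - x ^ 2) / (l - x) =
      regularPart R l (l - ε) - regularPart R l (l + ε) + π * l := by
  have hl₁ := le_abs_self l
  have hl₂ := neg_abs_le l
  have hleft : l ∉ Icc (-R) (l - ε) := fun h => by linarith [h.2]
  have hright : l ∉ Icc (l + ε) R := fun h => by linarith [h.1]
  have hdisj : Disjoint (Icc (-R) (l - ε)) (Icc (l + ε) R) :=
    disjoint_left.2 fun x h₁ h₂ => by linarith [h₁.2, h₂.1]
  rw [setOf_abs_le_and_le_abs_sub hε.le hl.le, setIntegral_union hdisj measurableSet_Icc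
    (continuousOn_sqrt_div hleft).integrableOn_Icc (continuousOn_sqrt_div hright).integrableOn_Icc,
    setIntegral_Icc_sqrt_div hl le_rfl (by linarith) (by linarith) hleft,
    setIntegral_Icc_sqrt_div hl (by linarith) (by linarith) le_rfl hright,
    ← antideriv_sub_sub_antideriv_add, ← antideriv_sub_antideriv_neg hl]
  ring

theorem tendsto_setIntegral_cutoff_sqrt_div (hl : |l| < R) :
    Tendsto (fun ε => ∫ x in {x : ℝ | |x| ≤ R ∧ ε ≤ |x - l|}, √(R ^ 2 - x ^ 2) / (l - x))
      (𝓝[>] 0) (𝓝 (π * l)) := by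
  have hcont :
      ContinuousAt (fun ε => regularPart R l (l - ε) - regularPart R l (l + ε) + π * l) 0 := by
    have h := continuousAt_regularPart hl hl.le
    have h₁ : ContinuousAt (fun ε => regularPart R l (l - ε)) 0 :=
      h.comp_of_eq (by fun_prop) (sub_zero l)
    have h₂ : ContinuousAt (fun ε => regularPart R l (l + ε)) 0 :=
      h.comp_of_eq (by fun_prop) (add_zero l)
    fun_prop
  have hlim := tendsto_nhdsWithin_of_tendsto_nhds (s := Ioi 0) hcont.tendsto
  simp only [sub_zero, add_zero, sub_self, zero_add] at hlim
  refine hlim.congr' ?_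
  filter_upwards [Ioc_mem_nhdsGT (sub_pos.2 hl)] with ε hε
  exact (setIntegral_cutoff_sqrt_div hl hε.1 hε.2).symm

end Semicircle

/-- Wigner's semicircle law: for `t > 0` and `|λ| < 2√t`, the semicircle density
solves the saddle-point equation in the principal value sense:
`P∫_{|λ'| ≤ 2√t} (1/(2πt))√(4t − λ'²)/(λ − λ') dλ' = λ/(2t)`. -/
theorem wigner_semicircle_saddle_point (t l : ℝ) (ht : 0 < t)
    (hl : |l| < 2 * Real.sqrt t) :
    Filter.Tendsto
      (fun ε : ℝ =>
        ∫ x in {x : ℝ | |x| ≤ 2 * Real.sqrt t ∧ ε ≤ |x - l|},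
          (1 / (2 * Real.pi * t)) * Real.sqrt (4 * t - x ^ 2) / (l - x))
      (nhdsWithin 0 (Set.Ioi 0)) (nhds (l / (2 * t))) := by
  have hR : (2 * √t) ^ 2 = 4 * t := by rw [mul_pow, sq_sqrt ht.le]; norm_num
  have h := (Semicircle.tendsto_setIntegral_cutoff_sqrt_div hl).const_mul (1 / (2 * π * t))
  rw [show 1 / (2 * π * t) * (π * l) = l / (2 * t) by field_simp] at h
  refine h.congr fun ε => ?_
  rw [← integral_const_mul]
  simp only [hR, mul_div_assoc]
end
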